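/- Let λ = 0 (Itô). The reversibility condition (2λ−1) ∇ᶜ·(σσᵀ) = 2λ σ ∇ᶜ·σᵀ reduces to ∇ᶜ·(σσᵀ) = 0, which by the contracted metric-compatibility identity is equivalent to the harmonic (de Donder) coordinate condition Γ^j_{ik} M^{ik} = 0 for all j, where Γ are the Christoffel symbols of g = M⁻¹ and M = σσᵀ. -/

import Mathlib

open Real Matrix

/-- Partial derivative in the `i`-th canonical coordinate direction. -/
noncomputable def pd {d : ℕ} (i : Fin d) (f : (Fin d → ℝ) → ℝ) (x : Fin d → ℝ) : ℝ :=
  fderiv ℝ f x (Pi.single i 1)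

/-- Christoffel symbols `Γ^k_{ij}` of the Levi-Civita connection of the metric `g`. -/
noncomputable def christoffel {d : ℕ} (g : (Fin d → ℝ) → Matrix (Fin d) (Fin d) ℝ)
    (k i j : Fin d) (x : Fin d → ℝ) : ℝ :=
  (1 / 2) * ∑ l, (g x)⁻¹ k l *
    (pd i (fun y => g y j l) x + pd j (fun y => g y i l) x - pd l (fun y => g y i j) x)

/-- Row covariant divergence of `M = σσᵀ` w.r.t. the Levi-Civita connection of
`g = (σσᵀ)⁻¹`. -/
noncomputable def covDivM {d : ℕ} (σ : (Fin d → ℝ) → Matrix (Fin d) (Fin d) ℝ)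
    (j : Fin d) (x : Fin d → ℝ) : ℝ :=
  (∑ i, pd i (fun y => (σ y * (σ y)ᵀ) j i) x)
    + ∑ i, ∑ k, christoffel (fun y => (σ y * (σ y)ᵀ)⁻¹) i i k x * (σ x * (σ x)ᵀ) j k

/-- Row covariant divergence of `σᵀ`. -/
noncomputable def covDivSigmaT {d : ℕ} (σ : (Fin d → ℝ) → Matrix (Fin d) (Fin d) ℝ)
    (ℓ : Fin d) (x : Fin d → ℝ) : ℝ :=
  (∑ i, pd i (fun y => σ y i ℓ) x)
    + ∑ i, ∑ k, christoffel (fun y => (σ y * (σ y)ᵀ)⁻¹) i i k x * σ x k ℓ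

/-! ### Auxiliary calculus lemmas for `pd` -/

private lemma pd_sum {d : ℕ} {ι : Type*} (s : Finset ι) (f : ι → (Fin d → ℝ) → ℝ)
    (i : Fin d) (x : Fin d → ℝ) (h : ∀ a ∈ s, DifferentiableAt ℝ (f a) x) :
    pd i (fun y => ∑ a ∈ s, f a y) x = ∑ a ∈ s, pd i (f a) x := by
  unfold pd; rw [fderiv_fun_sum h]; simp

private lemma pd_mul {d : ℕ} (f g : (Fin d → ℝ) → ℝ) (i : Fin d) (x : Fin d → ℝ)
    (hf : DifferentiableAt ℝ f x) (hg : DifferentiableAt ℝ g x) :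
    pd i (fun y => f y * g y) x = pd i f x * g x + f x * pd i g x := by
  unfold pd; rw [fderiv_fun_mul hf hg]
  simp [ContinuousLinearMap.add_apply, ContinuousLinearMap.smul_apply, smul_eq_mul]
  ring

private lemma pd_const {d : ℕ} (i : Fin d) (x : Fin d → ℝ) (c : ℝ) :
    pd i (fun _ => c) x = 0 := by simp [pd]

/-! ### Smoothness of matrix entries, determinants and inverses -/

private lemma hMc {d : ℕ} (σ : (Fin d → ℝ) → Matrix (Fin d) (Fin d) ℝ) (a b : Fin d)
    (hσ : ∀ i ℓ, ContDiff ℝ (⊤ : ℕ∞) fun x => σ x i ℓ) :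
    ContDiff ℝ (⊤ : ℕ∞) fun y => (σ y * (σ y)ᵀ) a b := by
  simp only [Matrix.mul_apply, Matrix.transpose_apply]
  exact ContDiff.sum fun l _ => (hσ a l).mul (hσ b l)

private lemma contDiff_det' {d : ℕ} {A : (Fin d → ℝ) → Matrix (Fin d) (Fin d) ℝ}
    (hA : ∀ i j, ContDiff ℝ (⊤ : ℕ∞) fun y => A y i j) :
    ContDiff ℝ (⊤ : ℕ∞) fun y => (A y).det := by
  simp only [Matrix.det_apply']
  exact ContDiff.sum fun p _ => contDiff_const.mul (contDiff_prod fun i _ => hA (p i) i)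

private lemma contDiff_inv_entry {d : ℕ} {A : (Fin d → ℝ) → Matrix (Fin d) (Fin d) ℝ}
    (hA : ∀ i j, ContDiff ℝ (⊤ : ℕ∞) fun y => A y i j)
    (hdet : ∀ y, (A y).det ≠ 0) (a b : Fin d) :
    ContDiff ℝ (⊤ : ℕ∞) fun y => (A y)⁻¹ a b := by
  have h1 : ∀ y, (A y)⁻¹ a b = ((A y).det)⁻¹ * (A y).adjugate a b := by
    intro y; rw [Matrix.inv_def, Ring.inverse_eq_inv]; simp [Matrix.smul_apply]
  simp only [h1]
  refine ContDiff.mul ((contDiff_det' hA).inv hdet) ?_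
  simp only [Matrix.adjugate_apply]
  apply contDiff_det'
  intro i k
  rcases eq_or_ne i b with h | h
  · simp only [Matrix.updateRow_apply, h, if_pos rfl]; exact contDiff_const
  · simp only [Matrix.updateRow_apply, if_neg h]; exact hA i k

/-! ### Derivative of `M` in terms of the derivative of `g = M⁻¹` -/

private lemma F4 {d : ℕ} (σ : (Fin d → ℝ) → Matrix (Fin d) (Fin d) ℝ)
    (hσ : ∀ i ℓ, ContDiff ℝ (⊤ : ℕ∞) fun x => σ x i ℓ)
    (hpos : ∀ x, (σ x * (σ x)ᵀ).PosDef) (x : Fin d → ℝ) (i a b : Fin d) :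
    pd i (fun y => (σ y * (σ y)ᵀ) a b) x
      = -(∑ k, ∑ l, (σ x * (σ x)ᵀ) a l
            * pd i (fun y => (σ y * (σ y)ᵀ)⁻¹ l k) x * (σ x * (σ x)ᵀ) k b) := by
  classical
  have hdet : ∀ y, (σ y * (σ y)ᵀ).det ≠ 0 := fun y => (hpos y).det_pos.ne'
  have hunit : ∀ y, IsUnit (σ y * (σ y)ᵀ).det := fun y => (hdet y).isUnit
  have hM : ∀ a b, ContDiff ℝ (⊤ : ℕ∞) fun y => (σ y * (σ y)ᵀ) a b := fun a b => hMc σ a b hσ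
  have hg : ∀ a b, ContDiff ℝ (⊤ : ℕ∞) fun y => (σ y * (σ y)ᵀ)⁻¹ a b :=
    contDiff_inv_entry hM hdet
  have hMd : ∀ a b, DifferentiableAt ℝ (fun y => (σ y * (σ y)ᵀ) a b) x :=
    fun a b => ((hM a b).differentiable (by simp)).differentiableAt
  have hgd : ∀ a b, DifferentiableAt ℝ (fun y => (σ y * (σ y)ᵀ)⁻¹ a b) x :=
    fun a b => ((hg a b).differentiable (by simp)).differentiableAt
  -- differentiate M * M⁻¹ = 1 entrywise
  have hconst : ∀ c : Fin d, (fun y => ∑ l, (σ y * (σ y)ᵀ) a l * (σ y * (σ y)ᵀ)⁻¹ l c)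
      = fun _ => ((1 : Matrix (Fin d) (Fin d) ℝ) a c) := by
    intro c; funext y
    rw [← Matrix.mul_apply, Matrix.mul_nonsing_inv _ (hunit y)]
  have key1 : ∀ c : Fin d,
      (∑ l, pd i (fun y => (σ y * (σ y)ᵀ) a l) x * (σ x * (σ x)ᵀ)⁻¹ l c)
        = -∑ l, (σ x * (σ x)ᵀ) a l * pd i (fun y => (σ y * (σ y)ᵀ)⁻¹ l c) x := by
    intro c
    have h0 : pd i (fun y => ∑ l, (σ y * (σ y)ᵀ) a l * (σ y * (σ y)ᵀ)⁻¹ l c) x = 0 := by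
      rw [hconst c, pd_const]
    rw [pd_sum _ _ _ _ (fun l _ => ((hMd a l).fun_mul (hgd l c)))] at h0
    have h1 : ∀ l : Fin d, pd i (fun y => (σ y * (σ y)ᵀ) a l * (σ y * (σ y)ᵀ)⁻¹ l c) x
        = pd i (fun y => (σ y * (σ y)ᵀ) a l) x * (σ x * (σ x)ᵀ)⁻¹ l c
          + (σ x * (σ x)ᵀ) a l * pd i (fun y => (σ y * (σ y)ᵀ)⁻¹ l c) x :=
      fun l => pd_mul _ _ _ _ (hMd a l) (hgd l c)
    simp only [h1, Finset.sum_add_distrib] at h0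
    linarith
  -- recover the derivative of M from key1, using g * M = 1
  have key2 : pd i (fun y => (σ y * (σ y)ᵀ) a b) x
      = ∑ k, (∑ l, pd i (fun y => (σ y * (σ y)ᵀ) a l) x * (σ x * (σ x)ᵀ)⁻¹ l k)
          * (σ x * (σ x)ᵀ) k b := by
    have hgm : ∀ l : Fin d, (∑ k, (σ x * (σ x)ᵀ)⁻¹ l k * (σ x * (σ x)ᵀ) k b)
        = if l = b then 1 else 0 := by
      intro l
      rw [← Matrix.mul_apply, Matrix.nonsing_inv_mul _ (hunit x), Matrix.one_apply]
    calc pd i (fun y => (σ y * (σ y)ᵀ) a b) x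
        = ∑ l, pd i (fun y => (σ y * (σ y)ᵀ) a l) x * (if l = b then (1:ℝ) else 0) := by
          symm
          simp [mul_ite, mul_one, mul_zero]
      _ = ∑ l, pd i (fun y => (σ y * (σ y)ᵀ) a l) x
            * (∑ k, (σ x * (σ x)ᵀ)⁻¹ l k * (σ x * (σ x)ᵀ) k b) := by
          simp only [hgm]
      _ = ∑ l, ∑ k, pd i (fun y => (σ y * (σ y)ᵀ) a l) x
            * ((σ x * (σ x)ᵀ)⁻¹ l k * (σ x * (σ x)ᵀ) k b) := by
          simp only [Finset.mul_sum]
      _ = ∑ k, ∑ l, pd i (fun y => (σ y * (σ y)ᵀ) a l) x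
            * ((σ x * (σ x)ᵀ)⁻¹ l k * (σ x * (σ x)ᵀ) k b) := Finset.sum_comm
      _ = ∑ k, (∑ l, pd i (fun y => (σ y * (σ y)ᵀ) a l) x * (σ x * (σ x)ᵀ)⁻¹ l k)
            * (σ x * (σ x)ᵀ) k b := by
          refine Finset.sum_congr rfl fun k _ => ?_
          rw [Finset.sum_mul]
          exact Finset.sum_congr rfl fun l _ => by ring
  rw [key2]
  simp only [key1]
  rw [← Finset.sum_neg_distrib]
  refine Finset.sum_congr rfl fun k _ => ?_
  rw [neg_mul, Finset.sum_mul]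

/-! ### The purely combinatorial identity -/

private lemma main_algebra {d : ℕ} (m : Fin d → Fin d → ℝ) (D : Fin d → Fin d → Fin d → ℝ)
    (hm : ∀ a b, m a b = m b a) (hD : ∀ i a b, D i a b = D i b a) (j : Fin d) :
    (∑ i, -(∑ k, ∑ l, m j l * D i l k * m k i))
      + (∑ i, ∑ k, ((1/2 : ℝ) * ∑ l, m i l * (D i k l + D k i l - D l i k)) * m j k)
    = -∑ i, ∑ k, ((1/2 : ℝ) * ∑ l, m j l * (D i k l + D k i l - D l i k)) * m i k := by
  classical
  have comm23 : ∀ f : Fin d → Fin d → Fin d → ℝ,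
      (∑ i, ∑ k, ∑ l, f i k l) = ∑ i, ∑ l, ∑ k, f i k l := fun f =>
    Finset.sum_congr rfl fun i _ => Finset.sum_comm
  set T1 : ℝ := ∑ i, ∑ k, ∑ l, m j l * D i k l * m i k with hT1
  set U2 : ℝ := ∑ i, ∑ k, ∑ l, m i l * D k i l * m j k with hU2
  -- first LHS term equals -T1
  have e1 : (∑ i, -(∑ k, ∑ l, m j l * D i l k * m k i)) = -T1 := by
    rw [Finset.sum_neg_distrib]
    congr 1
    refine Finset.sum_congr rfl fun i _ => Finset.sum_congr rfl fun k _ =>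
      Finset.sum_congr rfl fun l _ => ?_
    rw [hD i l k, hm k i]
  -- generic expansion of the half-sum products
  have expand : ∀ u v : Fin d → Fin d → ℝ,
      (∑ i, ∑ k, ((1/2 : ℝ) * ∑ l, u i l * (D i k l + D k i l - D l i k)) * v i k)
        = (1/2 : ℝ) * ((∑ i, ∑ k, ∑ l, u i l * D i k l * v i k)
            + (∑ i, ∑ k, ∑ l, u i l * D k i l * v i k)
            - (∑ i, ∑ k, ∑ l, u i l * D l i k * v i k)) := by
    intro u v
    have step : ∀ i k : Fin d,
        ((1/2 : ℝ) * ∑ l, u i l * (D i k l + D k i l - D l i k)) * v i k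
          = ∑ l, ((1/2 : ℝ) * (u i l * D i k l * v i k)
              + (1/2 : ℝ) * (u i l * D k i l * v i k)
              - (1/2 : ℝ) * (u i l * D l i k * v i k)) := by
      intro i k
      rw [Finset.mul_sum, Finset.sum_mul]
      refine Finset.sum_congr rfl fun l _ => ?_
      ring
    simp only [step, Finset.sum_add_distrib, Finset.sum_sub_distrib, ← Finset.mul_sum]
    ring
  -- symmetric cancellation swap (1st and 3rd D-index, with weight independent of i)
  have swap13 : ∀ c : Fin d → ℝ,
      (∑ i, ∑ k, ∑ l, m i l * D l i k * c k)
        = ∑ i, ∑ k, ∑ l, m i l * D i k l * c k := by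
    intro c
    calc (∑ i, ∑ k, ∑ l, m i l * D l i k * c k)
        = ∑ i, ∑ l, ∑ k, m i l * D l i k * c k := comm23 _
      _ = ∑ l, ∑ i, ∑ k, m i l * D l i k * c k := Finset.sum_comm
      _ = ∑ a, ∑ b, ∑ c', m a b * D a c' b * c c' := by
          refine Finset.sum_congr rfl fun a _ => Finset.sum_congr rfl fun b _ =>
            Finset.sum_congr rfl fun c' _ => ?_
          rw [hm b a, hD a b c']
      _ = ∑ i, ∑ k, ∑ l, m i l * D i k l * c k := (comm23 _).symm
  -- second LHS term equals (1/2) * U2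
  have e2 : (∑ i, ∑ k, ((1/2 : ℝ) * ∑ l, m i l * (D i k l + D k i l - D l i k)) * m j k)
      = (1/2 : ℝ) * U2 := by
    rw [expand m (fun _ k => m j k), swap13 (fun k => m j k)]
    ring
  -- T2 = T1
  have e3 : (∑ i, ∑ k, ∑ l, m j l * D k i l * m i k) = T1 := by
    calc (∑ i, ∑ k, ∑ l, m j l * D k i l * m i k)
        = ∑ k, ∑ i, ∑ l, m j l * D k i l * m i k := Finset.sum_comm
      _ = T1 := by
          refine Finset.sum_congr rfl fun a _ => Finset.sum_congr rfl fun b _ =>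
            Finset.sum_congr rfl fun l _ => ?_
          rw [hm b a]
  -- T3 = U2
  have e4 : (∑ i, ∑ k, ∑ l, m j l * D l i k * m i k) = U2 := by
    calc (∑ i, ∑ k, ∑ l, m j l * D l i k * m i k)
        = ∑ i, ∑ l, ∑ k, m j l * D l i k * m i k := comm23 _
      _ = ∑ l, ∑ i, ∑ k, m j l * D l i k * m i k := Finset.sum_comm
      _ = ∑ a, ∑ b, ∑ c, m b c * D a b c * m j a := by
          refine Finset.sum_congr rfl fun a _ => Finset.sum_congr rfl fun b _ =>
            Finset.sum_congr rfl fun c _ => ?_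
          ring
      _ = ∑ k, ∑ i, ∑ l, m i l * D k i l * m j k := rfl
      _ = U2 := Finset.sum_comm
  rw [e1, e2, expand (fun _ l => m j l) m, e3, e4]
  show -T1 + (1/2 : ℝ) * U2 = -((1/2 : ℝ) * (T1 + T1 - U2))
  ring

/-! ### The contracted metric-compatibility identity `(∇ᶜ·M)_j = −Γ^j_{ik} M^{ik}` -/

private lemma covDiv_key {d : ℕ} (σ : (Fin d → ℝ) → Matrix (Fin d) (Fin d) ℝ)
    (hσ : ∀ i ℓ, ContDiff ℝ (⊤ : ℕ∞) fun x => σ x i ℓ)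
    (hpos : ∀ x, (σ x * (σ x)ᵀ).PosDef) (j : Fin d) (x : Fin d → ℝ) :
    covDivM σ j x
      = -∑ i, ∑ k, christoffel (fun y => (σ y * (σ y)ᵀ)⁻¹) j i k x * (σ x * (σ x)ᵀ) i k := by
  classical
  have hdet : ∀ y, (σ y * (σ y)ᵀ).det ≠ 0 := fun y => (hpos y).det_pos.ne'
  have hunit : ∀ y, IsUnit (σ y * (σ y)ᵀ).det := fun y => (hdet y).isUnit
  have hginv : ∀ y : Fin d → ℝ, ((σ y * (σ y)ᵀ)⁻¹)⁻¹ = σ y * (σ y)ᵀ :=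
    fun y => Matrix.nonsing_inv_nonsing_inv _ (hunit y)
  have hMsym : ∀ a b : Fin d, (σ x * (σ x)ᵀ) a b = (σ x * (σ x)ᵀ) b a := by
    intro a b
    simp [Matrix.mul_apply, Matrix.transpose_apply, mul_comm]
  have hgsym : ∀ (y : Fin d → ℝ) (a b : Fin d),
      (σ y * (σ y)ᵀ)⁻¹ a b = (σ y * (σ y)ᵀ)⁻¹ b a := by
    intro y a b
    have hs : (σ y * (σ y)ᵀ)ᵀ = σ y * (σ y)ᵀ := Matrix.ext fun p q => by
      simp [Matrix.mul_apply, Matrix.transpose_apply, mul_comm]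
    conv_lhs => rw [← hs]
    rw [← Matrix.transpose_nonsing_inv]
    rfl
  have hD : ∀ i a b : Fin d, pd i (fun y => (σ y * (σ y)ᵀ)⁻¹ a b) x
      = pd i (fun y => (σ y * (σ y)ᵀ)⁻¹ b a) x := by
    intro i a b
    congr 1
    funext y
    exact hgsym y a b
  simp only [covDivM, christoffel, hginv]
  rw [Finset.sum_congr rfl (fun i (_ : i ∈ Finset.univ) => F4 σ hσ hpos x i j i)]
  exact main_algebra (fun a b => (σ x * (σ x)ᵀ) a b)
    (fun i a b => pd i (fun y => (σ y * (σ y)ᵀ)⁻¹ a b) x) hMsym hD j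

/-- for `λ = 0` (Itô) the reversibility condition
`(2λ−1)∇ᶜ·(σσᵀ) = 2λ σ∇ᶜ·σᵀ` reduces to `∇ᶜ·(σσᵀ) = 0`, which is equivalent to the
harmonic (de Donder) coordinate condition `Γ^j_{ik} M^{ik} = 0`. -/
theorem ito_reversibility_iff_harmonic_coordinates {d : ℕ}
    (σ : (Fin d → ℝ) → Matrix (Fin d) (Fin d) ℝ)
    (hσ : ∀ i ℓ, ContDiff ℝ (⊤ : ℕ∞) fun x => σ x i ℓ)
    (hσinv : ∀ x, IsUnit (σ x))
    (hpos : ∀ x, (σ x * (σ x)ᵀ).PosDef) :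
    (∀ (j : Fin d) (x : Fin d → ℝ),
        (2 * (0 : ℝ) - 1) * covDivM σ j x
          = 2 * (0 : ℝ) * ∑ ℓ, σ x j ℓ * covDivSigmaT σ ℓ x)
      ↔ (∀ (j : Fin d) (x : Fin d → ℝ),
          ∑ i, ∑ k,
            christoffel (fun y => (σ y * (σ y)ᵀ)⁻¹) j i k x * (σ x * (σ x)ᵀ) i k = 0) := by
  constructor
  · intro h j x
    have h1 := h j x
    have h2 := covDiv_key σ hσ hpos j x
    have h3 : covDivM σ j x = 0 := by linarith [h1]
    rw [h2] at h3
    linarith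
  · intro h j x
    have h2 := covDiv_key σ hσ hpos j x
    rw [h j x] at h2
    simp at h2
    rw [h2]
    ring
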